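/- arXiv:2303.10302 — 3 statements merged into one kernel-verified Lean document; each statement's English description precedes it below -/
import Mathlib

section
/- General concavity along integer convex combinations: for any horizon H, state s, budgets b ≤ b' ≤ b'', and rational α ∈ [0,1] such that b' = α·b + (1-α)·b'', one has V H s b' ≥ α·V H s b + (1-α)·V H s b''. -/
noncomputable def V (smax d0 : ℕ) (r : ℝ) : ℕ → ℕ → ℕ → ℝ
  | 0, s, _ => if 0 < s then r else 0
  | (H+1), s, b =>
      if s = 0 then 0
      else r + (if 0 < b then max (V smax d0 r H (s - d0) b) (V smax d0 r H smax (b - 1))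
                else V smax d0 r H (s - d0) b)

lemma ceil_pos (d0 : ℕ) (hd0 : 0 < d0) (s : ℕ) (hs : 0 < s) : 1 ≤ (s + d0 - 1) / d0 := by
  rw [Nat.le_div_iff_mul_le hd0]; omega

lemma ceil_sub (d0 : ℕ) (hd0 : 0 < d0) (s : ℕ) (hs : 0 < s) :
    (s - d0 + d0 - 1) / d0 = (s + d0 - 1) / d0 - 1 := by
  rcases le_or_gt s d0 with h | h
  · have l1 : (s - d0 + d0 - 1) / d0 = 0 := Nat.div_eq_of_lt (by omega)
    have l2 : (s + d0 - 1) / d0 = 1 := by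
      apply Nat.div_eq_of_lt_le <;> omega
    rw [l1, l2]
  · have e1 : s - d0 + d0 - 1 = s - 1 := by omega
    have e2 : s + d0 - 1 = (s - 1) + d0 := by omega
    rw [e1, e2, Nat.add_div_right _ hd0]
    simp

lemma V_closed (smax d0 : ℕ) (hsmax : 0 < smax) (hd0 : 0 < d0) (r : ℝ) (hr : 0 < r) :
    ∀ H s b, V smax d0 r H s b =
      if s = 0 then 0
      else r * (min (H + 1) ((s + d0 - 1) / d0 + b * ((smax + d0 - 1) / d0)) : ℕ) := by
  intro H
  induction H with
  | zero =>
    intro s b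
    by_cases hs : s = 0
    · simp [V, hs]
    · have h1 : 1 ≤ (s + d0 - 1) / d0 := ceil_pos d0 hd0 s (by omega)
      have h2 : min (0 + 1) ((s + d0 - 1) / d0 + b * ((smax + d0 - 1) / d0)) = 1 := by omega
      simp [V, hs, h2, Nat.pos_of_ne_zero hs]
  | succ H IH =>
    intro s b
    by_cases hs : s = 0
    · simp [V, hs]
    · have hs' : 0 < s := Nat.pos_of_ne_zero hs
      have hc1 : 1 ≤ (smax + d0 - 1) / d0 := ceil_pos d0 hd0 smax hsmax
      have hcs1 : 1 ≤ (s + d0 - 1) / d0 := ceil_pos d0 hd0 s hs'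
      have hsub : (s - d0 + d0 - 1) / d0 = (s + d0 - 1) / d0 - 1 := ceil_sub d0 hd0 s hs'
      have hsm : smax ≠ 0 := hsmax.ne'
      simp only [V, if_neg hs]
      simp only [IH]
      rw [hsub]
      simp only [if_neg hsm]
      set c := (smax + d0 - 1) / d0 with hc
      set cs := (s + d0 - 1) / d0 with hcs
      by_cases hb : 0 < b
      · obtain ⟨n, rfl⟩ : ∃ n, b = n + 1 := ⟨b - 1, by omega⟩
        rw [if_pos hb]
        have hb1 : c + n * c = (n + 1) * c := by ring
        simp only [Nat.add_sub_cancel, hb1]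
        generalize (n + 1) * c = K
        by_cases hsd : s - d0 = 0
        · have hz : (s - d0 + d0 - 1) / d0 = 0 := Nat.div_eq_of_lt (by omega)
          have hcseq : cs = 1 := by omega
          rw [if_pos hsd, hcseq]
          rw [max_eq_right (by positivity : (0:ℝ) ≤ r * ((H + 1) ⊓ K : ℕ))]
          have hm : (H + 1) ⊓ K + 1 = (H + 1 + 1) ⊓ (1 + K) := by omega
          rw [← hm]
          push_cast
          ring
        · rw [if_neg hsd]
          have hle : ((H + 1) ⊓ K : ℕ) ≤ (H + 1) ⊓ (cs - 1 + K) := by omega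
          rw [max_eq_left (by
            apply mul_le_mul_of_nonneg_left _ hr.le
            exact_mod_cast hle)]
          have hm : (H + 1) ⊓ (cs - 1 + K) + 1 = (H + 1 + 1) ⊓ (cs + K) := by omega
          rw [← hm]
          push_cast
          ring
      · rw [if_neg hb]
        have hb0 : b = 0 := by omega
        subst hb0
        simp only [Nat.zero_mul, Nat.add_zero]
        by_cases hsd : s - d0 = 0
        · have hz : (s - d0 + d0 - 1) / d0 = 0 := Nat.div_eq_of_lt (by omega)
          have hcseq : cs = 1 := by omega
          rw [if_pos hsd, hcseq]
          have hm : (H + 1 + 1) ⊓ 1 = 1 := by omega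
          rw [hm]
          push_cast
          ring
        · rw [if_neg hsd]
          have hm : (H + 1) ⊓ (cs - 1) + 1 = (H + 1 + 1) ⊓ cs := by omega
          rw [← hm]
          push_cast
          ring

theorem stmt11 (smax d0 : ℕ) (hsmax : 0 < smax) (hd0 : 0 < d0) (hds : d0 < smax)
    (r : ℝ) (hr : 0 < r) :
    ∀ H s (b b' b'' : ℕ) (α : ℚ), b ≤ b' → b' ≤ b'' → 0 ≤ α → α ≤ 1 →
      (b' : ℚ) = α * b + (1 - α) * b'' →
      (α : ℝ) * V smax d0 r H s b + (1 - (α : ℝ)) * V smax d0 r H s b'' ≤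
        V smax d0 r H s b' := by
  intro H s b b' b'' α hbb' hb'b'' hα0 hα1 hb'
  have hα0' : (0 : ℝ) ≤ (α : ℝ) := by exact_mod_cast hα0
  have hα1' : (α : ℝ) ≤ 1 := by exact_mod_cast hα1
  have hb'R : (b' : ℝ) = (α : ℝ) * b + (1 - (α : ℝ)) * b'' := by
    have h := congrArg (fun q : ℚ => (q : ℝ)) hb'
    push_cast at h
    exact h
  simp only [V_closed smax d0 hsmax hd0 r hr]
  by_cases hs : s = 0
  · simp [hs]
  · simp only [if_neg hs]
    push_cast [Nat.cast_min]
    set A : ℝ := (((s + d0 - 1) / d0 : ℕ) : ℝ) with hA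
    set C : ℝ := (((smax + d0 - 1) / d0 : ℕ) : ℝ) with hC
    set x1 : ℝ := ((H : ℝ) + 1) ⊓ (A + b * C) with hx1
    set x2 : ℝ := ((H : ℝ) + 1) ⊓ (A + b'' * C) with hx2
    have k1a : x1 ≤ (H : ℝ) + 1 := min_le_left _ _
    have k1b : x1 ≤ A + b * C := min_le_right _ _
    have k2a : x2 ≤ (H : ℝ) + 1 := min_le_left _ _
    have k2b : x2 ≤ A + b'' * C := min_le_right _ _
    have key : (α : ℝ) * x1 + (1 - (α : ℝ)) * x2 ≤ ((H : ℝ) + 1) ⊓ (A + b' * C) := by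
      apply le_min
      · nlinarith
      · rw [hb'R]
        nlinarith [mul_le_mul_of_nonneg_left k1b hα0',
          mul_le_mul_of_nonneg_left k2b (by linarith : (0:ℝ) ≤ 1 - (α : ℝ))]
    calc (α : ℝ) * (r * x1) + (1 - (α : ℝ)) * (r * x2)
        = r * ((α : ℝ) * x1 + (1 - (α : ℝ)) * x2) := by ring
      _ ≤ r * (((H : ℝ) + 1) ⊓ (A + b' * C)) := mul_le_mul_of_nonneg_left key hr.le
end

section
/- Exact value at zero budget from the top state: if ⌈s_max/d0⌉ ≥ H + 1, then V H s_max 0 = r * (H + 1); and if ⌈s_max/d0⌉ ≤ H, then V H s_max 0 = r * ⌈s_max/d0⌉, where ⌈s_max/d0⌉ denotes the least k with s_max ≤ k * d0. -/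
lemma V_zero_state (smax d0 : ℕ) (r : ℝ) : ∀ H b, V smax d0 r H 0 b = 0 := by
  intro H b
  cases H <;> simp [V]

lemma V_main (smax d0 : ℕ) (hd0 : 0 < d0) (r : ℝ) :
    ∀ H s, 0 < s → V smax d0 r H s 0 = r * (min (H + 1) ((s - 1) / d0 + 1) : ℕ) := by
  intro H
  induction H with
  | zero =>
      intro s hs
      simp [V, hs]
  | succ H ih =>
      intro s hs
      rw [show V smax d0 r (H+1) s 0 = r + V smax d0 r H (s - d0) 0 by
        simp only [V]; rw [if_neg (by omega : ¬ s = 0), if_neg (lt_irrefl 0)]]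
      rcases le_or_gt s d0 with h | h
      · have hsub : s - d0 = 0 := Nat.sub_eq_zero_of_le h
        have hdiv : (s - 1) / d0 = 0 := Nat.div_eq_of_lt (by omega)
        rw [hsub, V_zero_state, hdiv]
        simp
      · have hpos : 0 < s - d0 := by omega
        rw [ih _ hpos]
        have hc : (s - 1) / d0 = (s - d0 - 1) / d0 + 1 := by
          have : s - 1 = (s - d0 - 1) + d0 := by omega
          rw [this, Nat.add_div_right _ hd0]
        rw [hc]
        have hmin : min (H + 1 + 1) ((s - d0 - 1) / d0 + 1 + 1)
            = min (H + 1) ((s - d0 - 1) / d0 + 1) + 1 := by omega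
        rw [hmin]
        push_cast
        ring

theorem stmt13 (smax d0 : ℕ) (hsmax : 0 < smax) (hd0 : 0 < d0) (hds : d0 ≤ smax)
    (r : ℝ) (hr : 0 < r) (k : ℕ) (hk : IsLeast {k : ℕ | smax ≤ k * d0} k) :
    ∀ H, (H + 1 ≤ k → V smax d0 r H smax 0 = r * (H + 1)) ∧
      (k ≤ H → V smax d0 r H smax 0 = r * k) := by
  have hkval : k = (smax - 1) / d0 + 1 := by
    obtain ⟨hk1, hk2⟩ := hk
    have h1 : smax ≤ ((smax - 1) / d0 + 1) * d0 := by
      have hm := Nat.div_add_mod (smax - 1) d0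
      have hmlt := Nat.mod_lt (smax - 1) hd0
      have : ((smax - 1) / d0 + 1) * d0 = d0 * ((smax - 1) / d0) + d0 := by ring
      omega
    have h2 : (smax - 1) / d0 + 1 ≤ k := by
      have : (smax - 1) / d0 < k := by
        rw [Nat.div_lt_iff_lt_mul hd0]
        have := hk1
        simp only [Set.mem_setOf_eq] at this
        omega
      omega
    exact le_antisymm (hk2 h1) h2
  intro H
  constructor
  · intro hH
    rw [V_main smax d0 hd0 r H smax hsmax]
    have : min (H + 1) ((smax - 1) / d0 + 1) = H + 1 := by omega
    rw [this]; push_cast; ring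
  · intro hH
    rw [V_main smax d0 hd0 r H smax hsmax]
    have : min (H + 1) ((smax - 1) / d0 + 1) = k := by omega
    rw [this]
end

section
/- The value function with unlimited budget: for all s > 0 and all H, lim over b (equivalently, for b ≥ ⌈H/2⌉) V H s b = r * (H + 1); that is, with sufficient budget the process never reaches the absorbing state within the horizon and collects the maximum possible reward. -/
lemma V_le (smax d0 : ℕ) (r : ℝ) (hr : 0 < r) :
    ∀ H s b, V smax d0 r H s b ≤ r * (H + 1) := by
  intro H
  induction H with
  | zero =>
    intro s b
    rw [V]
    split
    · push_cast; linarith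
    · positivity
  | succ H ih =>
    intro s b
    have h1 := ih (s - d0) b
    have h2 := ih smax (b - 1)
    rw [V]
    split
    · positivity
    · have hm : (if 0 < b then max (V smax d0 r H (s - d0) b) (V smax d0 r H smax (b - 1))
          else V smax d0 r H (s - d0) b) ≤ r * (H + 1) := by
        split
        · exact max_le h1 h2
        · exact h1
      push_cast
      linarith

lemma V_sat (smax d0 : ℕ) (hsmax : 0 < smax) (hd0 : 0 < d0) (hds : d0 < smax)
    (r : ℝ) (hr : 0 < r) :
    ∀ H s b, 0 < s → ((H + 1) / 2 ≤ b ∨ (d0 < s ∧ H / 2 ≤ b)) →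
      V smax d0 r H s b = r * (H + 1) := by
  intro H
  induction H with
  | zero =>
    intro s b hs _
    rw [V]
    simp [hs]
  | succ H ih =>
    intro s b hs hb
    rw [V]
    rw [if_neg (by omega)]
    by_cases hcase : d0 < s
    · -- use the (s - d0) branch
      have hsd : 0 < s - d0 := by omega
      have hb' : (H + 1) / 2 ≤ b := by omega
      have key : V smax d0 r H (s - d0) b = r * (H + 1) := ih (s - d0) b hsd (Or.inl hb')
      split
      · have hmax : max (V smax d0 r H (s - d0) b) (V smax d0 r H smax (b - 1)) = r * (H + 1) := by
          apply le_antisymm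
          · exact max_le (V_le smax d0 r hr H (s - d0) b) (V_le smax d0 r hr H smax (b - 1))
          · rw [← key]; exact le_max_left _ _
        rw [hmax]; push_cast; ring
      · rw [key]; push_cast; ring
    · -- s ≤ d0, must refill; hb gives (H+2)/2 ≤ b
      have hb2 : (H + 1 + 1) / 2 ≤ b := by
        rcases hb with h | ⟨h, _⟩
        · exact h
        · omega
      have hbpos : 0 < b := by omega
      rw [if_pos hbpos]
      have hb' : H / 2 ≤ b - 1 := by omega
      have key : V smax d0 r H smax (b - 1) = r * (H + 1) :=
        ih smax (b - 1) hsmax (Or.inr ⟨hds, hb'⟩)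
      have hmax : max (V smax d0 r H (s - d0) b) (V smax d0 r H smax (b - 1)) = r * (H + 1) := by
        apply le_antisymm
        · exact max_le (V_le smax d0 r hr H (s - d0) b) (V_le smax d0 r hr H smax (b - 1))
        · rw [← key]; exact le_max_right _ _
      rw [hmax]; push_cast; ring

theorem stmt17 (smax d0 : ℕ) (hsmax : 0 < smax) (hd0 : 0 < d0) (hds : d0 < smax)
    (r : ℝ) (hr : 0 < r) :
    ∀ H s, 0 < s →
      Filter.Tendsto (fun b => V smax d0 r H s b) Filter.atTop (nhds (r * (H + 1))) ∧
      (∀ b, (H + 1) / 2 ≤ b → V smax d0 r H s b = r * (H + 1)) := by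
  intro H s hs
  have hsat : ∀ b, (H + 1) / 2 ≤ b → V smax d0 r H s b = r * (H + 1) := fun b hb =>
    V_sat smax d0 hsmax hd0 hds r hr H s b hs (Or.inl hb)
  refine ⟨?_, hsat⟩
  apply Filter.Tendsto.congr' _ tendsto_const_nhds
  filter_upwards [Filter.eventually_ge_atTop ((H + 1) / 2)] with b hb
  exact (hsat b hb).symm
end
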